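/- arXiv:1002.4210 — 5 statements merged into one kernel-verified Lean document; each statement's English description precedes it below -/
import Mathlib

section
/- For every l ≥ 1, if an (l+2)-UM-critical tree has exactly one vertex v of degree at least 3, then it contains a simple path on 2^l vertices one of whose endpoints is v. -/
open scoped Classical

noncomputable section

/-- A conflict-free coloring of a hyperedge set `E` with `k` colors: every hyperedge
has some color occurring on exactly one of its vertices. -/
def IsCFColoring {V : Type} {k : ℕ} (E : Set (Finset V)) (C : V → Fin k) : Prop :=
  ∀ e ∈ E, ∃ c : Fin k, (e.filter fun v => C v = c).card = 1

/-- A unique-maximum coloring of a hyperedge set `E` with `k` colors: every hyperedge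
has exactly one vertex whose color is maximum on the hyperedge. -/
def IsUMColoring {V : Type} {k : ℕ} (E : Set (Finset V)) (C : V → Fin k) : Prop :=
  ∀ e ∈ E, ∃! v, v ∈ e ∧ ∀ u ∈ e, C u ≤ C v

/-- An odd coloring of a hyperedge set `E` with `k` colors: every hyperedge
has some color occurring on an odd number of its vertices. -/
def IsOddColoring {V : Type} {k : ℕ} (E : Set (Finset V)) (C : V → Fin k) : Prop :=
  ∀ e ∈ E, ∃ c : Fin k, Odd ((e.filter fun v => C v = c).card)

/-- The conflict-free chromatic number of a hypergraph. -/
def cfNum {V : Type} (E : Set (Finset V)) : ℕ :=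
  sInf {k | ∃ C : V → Fin k, IsCFColoring E C}

/-- The unique-maximum chromatic number of a hypergraph. -/
def umNum {V : Type} (E : Set (Finset V)) : ℕ :=
  sInf {k | ∃ C : V → Fin k, IsUMColoring E C}

/-- The odd chromatic number of a hypergraph. -/
def oddNum {V : Type} (E : Set (Finset V)) : ℕ :=
  sInf {k | ∃ C : V → Fin k, IsOddColoring E C}

/-- The hyperedges of the path hypergraph of a graph `G`: vertex sets of simple paths. -/
def pathEdges {V : Type} (G : SimpleGraph V) : Set (Finset V) :=
  {S | ∃ (u v : V) (p : G.Walk u v), p.IsPath ∧ S = p.support.toFinset}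

/-- Unique-maximum chromatic number of a graph with respect to paths. -/
def UM {V : Type} (G : SimpleGraph V) : ℕ := umNum (pathEdges G)

/-- Conflict-free chromatic number of a graph with respect to paths. -/
def CF {V : Type} (G : SimpleGraph V) : ℕ := cfNum (pathEdges G)

/-- Odd chromatic number of a graph with respect to paths. -/
def ODD {V : Type} (G : SimpleGraph V) : ℕ := oddNum (pathEdges G)

/-- The complete binary tree with `d` levels (`2^d - 1` vertices), with vertices the
binary strings of length `< d`; each vertex `l` is adjacent to its children `b :: l`. -/
def binaryTree (d : ℕ) : SimpleGraph {l : List Bool // l.length < d} :=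
  SimpleGraph.fromRel fun a b => ∃ bit : Bool, b.1 = bit :: a.1

/-- `IsSubdivPaths G H f P` : the data `f` (branch vertices) and `P` (a path of `H` for
every edge of `G`) witness that `H` contains a subdivision of `G` as a subgraph:
`f` is injective, the paths are internally disjoint from each other and from the
branch vertices. -/
def IsSubdivPaths {V W : Type} (G : SimpleGraph V) (H : SimpleGraph W) (f : V → W)
    (P : ∀ u v, G.Adj u v → H.Walk (f u) (f v)) : Prop :=
  Function.Injective f ∧
  (∀ u v (h : G.Adj u v), (P u v h).IsPath) ∧
  (∀ u v (h : G.Adj u v), P v u h.symm = (P u v h).reverse) ∧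
  (∀ u v (h : G.Adj u v) (w : W),
    w ∈ (P u v h).support → w ≠ f u → w ≠ f v → w ∉ Set.range f) ∧
  (∀ u v (h : G.Adj u v) (u' v' : V) (h' : G.Adj u' v'), s(u, v) ≠ s(u', v') →
    ∀ w : W, w ∈ (P u v h).support → w ∈ (P u' v' h').support → w ∈ Set.range f)

/-- `H` contains a subdivision of `G` as a subgraph. -/
def ContainsSubdivision {V W : Type} (G : SimpleGraph V) (H : SimpleGraph W) : Prop :=
  ∃ f P, IsSubdivPaths G H f P

/-- `IsSubdivision G H f P` : the data `f`, `P` witness that `H` is (exactly) a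
subdivision of `G`: additionally to `IsSubdivPaths`, every vertex of `H` and every
edge of `H` comes from some path replacing an edge of `G`, or is a branch vertex. -/
def IsSubdivision {V W : Type} (G : SimpleGraph V) (H : SimpleGraph W) (f : V → W)
    (P : ∀ u v, G.Adj u v → H.Walk (f u) (f v)) : Prop :=
  IsSubdivPaths G H f P ∧
  (∀ w : W, w ∈ Set.range f ∨ ∃ u v h, w ∈ (P u v h).support) ∧
  (∀ a b : W, H.Adj a b ↔ ∃ u v h, s(a, b) ∈ (P u v h).edges)

/-- `H` is a subdivision of `G`. -/
def Subdivides {V W : Type} (G : SimpleGraph V) (H : SimpleGraph W) : Prop :=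
  ∃ f P, IsSubdivision G H f P

/-- A graph is UM-critical if every proper subgraph has strictly smaller
unique-maximum chromatic number with respect to paths. -/
def UMCritical {V : Type} (G : SimpleGraph V) : Prop :=
  ∀ G' : G.Subgraph, G' ≠ ⊤ → UM G'.coe < UM G

/-- A graph is `k`-UM-critical if it is UM-critical and its UM number equals `k`. -/
def UMCriticalK {V : Type} (k : ℕ) (G : SimpleGraph V) : Prop :=
  UMCritical G ∧ UM G = k

/-- A family of sequences of distinct elements of `Fin n` is prefix set-free if no
nonempty prefix of a member (including the member itself) has the same underlying set
as another member. -/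
def IsPSF {n : ℕ} (F : Finset (List (Fin n))) : Prop :=
  (∀ l ∈ F, l.Nodup) ∧
  ∀ A ∈ F, ∀ B ∈ F, A ≠ B →
    ∀ p : List (Fin n), p ≠ [] → p <+: A → p.toFinset ≠ B.toFinset

/-- A `[k,d,n]` prefix set-free family: ground set `Fin n`, every sequence of length at
least `k`, and at least `2^d` members. -/
def IsPSFFamily (k d n : ℕ) (F : Finset (List (Fin n))) : Prop :=
  IsPSF F ∧ (∀ l ∈ F, k ≤ l.length) ∧ 2 ^ d ≤ F.card

/-! If no vertex lies at distance `2 ^ l - 1` from `v`, then `l + 1` colours suffice: `v` gets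
the top colour `l` and every other vertex `u` the 2-adic valuation of `dist v u`, which is `< l`.
A path through `v` has `v` as its unique maximum. In a tree no vertex has two neighbours closer
to `v`, and since `v` is the only vertex of degree `≥ 3`, no other vertex has two neighbours
farther from `v`; so the distance to `v` is strictly monotone along a path avoiding `v`. Such a
path therefore sees an interval of positive distances, each exactly once, and on an interval of
positive integers the 2-adic valuation has a unique maximum. -/

theorem Nat.existsUnique_max_padicValNat_two_Icc {a b : ℕ} (ha : 0 < a) (hab : a ≤ b) :
    ∃! n, n ∈ Finset.Icc a b ∧ ∀ m ∈ Finset.Icc a b, padicValNat 2 m ≤ padicValNat 2 n := by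
  obtain ⟨n, hn, hmax⟩ :=
    Finset.exists_max_image _ (padicValNat 2) (Finset.nonempty_Icc.mpr hab)
  set M := padicValNat 2 n
  have hndvd : ∀ x ∈ Finset.Icc a b, ¬ 2 ^ (M + 1) ∣ x := fun x hx hdvd => by
    have := (padicValNat_dvd_iff_le (by grind)).mp hdvd
    grind [hmax x hx]
  suffices key : ∀ m₁ ∈ Finset.Icc a b, ∀ m₂ ∈ Finset.Icc a b, m₁ < m₂ →
      padicValNat 2 m₁ = M → padicValNat 2 m₂ = M → False by
    refine ⟨n, ⟨hn, hmax⟩, fun m ⟨hm, hmmax⟩ => ?_⟩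
    have hv : padicValNat 2 m = M := le_antisymm (hmax m hm) (hmmax n hn)
    by_contra hne
    rcases Nat.lt_or_gt_of_ne hne with h | h
    · exact key m hm n hn h hv rfl
    · exact key n hn m hm h rfl hv
  intro m₁ hm₁ m₂ hm₂ hlt h₁ h₂
  -- `m₁ = 2^M s` with `s` odd and `m₂ = 2^M t` with `t > s`, so `2^M (s+1) ∈ [m₁, m₂]`
  -- is divisible by `2^(M+1)`.
  obtain ⟨s, rfl⟩ : 2 ^ M ∣ m₁ := h₁ ▸ pow_padicValNat_dvd
  obtain ⟨t, rfl⟩ : 2 ^ M ∣ m₂ := h₂ ▸ pow_padicValNat_dvd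
  have hs : Odd s := Nat.not_even_iff_odd.mp fun ⟨k, hk⟩ =>
    hndvd _ hm₁ ⟨k, by rw [hk, pow_succ]; ring⟩
  have hst : s < t := Nat.lt_of_mul_lt_mul_left hlt
  have hmid : 2 ^ M * (s + 1) ∈ Finset.Icc a b := by
    have := Nat.mul_le_mul_left (2 ^ M) (Nat.succ_le_of_lt hst)
    grind
  obtain ⟨k, hk⟩ := hs.add_one
  exact hndvd _ hmid ⟨k, by rw [hk, pow_succ]; ring⟩

theorem Finset.existsUnique_max_comp_of_injOn {α β γ : Type*} [DecidableEq β] [LinearOrder γ]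
    {s : Finset α} {f : α → β} (φ : β → γ) (hf : Set.InjOn f s)
    (h : ∃! b, b ∈ s.image f ∧ ∀ b' ∈ s.image f, φ b' ≤ φ b) :
    ∃! a, a ∈ s ∧ ∀ a' ∈ s, φ (f a') ≤ φ (f a) := by
  obtain ⟨_, ⟨hb, hmax⟩, huniq⟩ := h
  obtain ⟨a, ha, rfl⟩ := Finset.mem_image.mp hb
  refine ⟨a, ⟨ha, fun a' ha' => hmax _ (Finset.mem_image_of_mem f ha')⟩, ?_⟩
  rintro a' ⟨ha', hmax'⟩
  refine hf ha' ha (huniq _ ⟨Finset.mem_image_of_mem f ha', ?_⟩)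
  rintro _ hb'
  obtain ⟨a'', ha'', rfl⟩ := Finset.mem_image.mp hb'
  exact hmax' a'' ha''

theorem Nat.eq_add_or_add_eq_of_steps {s : ℕ → ℕ} {n : ℕ}
    (hstep : ∀ i < n, s (i + 1) = s i + 1 ∨ s i = s (i + 1) + 1)
    (hturn : ∀ i, i + 2 ≤ n → (s (i + 1) = s i + 1 ↔ s (i + 2) = s (i + 1) + 1)) :
    (∀ i ≤ n, s i = s 0 + i) ∨ (∀ i ≤ n, s i + i = s 0) := by
  have hdir : ∀ i < n, (s (i + 1) = s i + 1 ↔ s 1 = s 0 + 1) := by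
    intro i hi
    induction i with
    | zero => rfl
    | succ i ih => exact (hturn i (by omega)).symm.trans (ih (by omega))
  by_cases hup : s 1 = s 0 + 1
  · left
    intro i hi
    induction i with
    | zero => rfl
    | succ i ih => have := (hdir i (by omega)).mpr hup; grind
  · right
    intro i hi
    induction i with
    | zero => rfl
    | succ i ih =>
      have := hstep i (by omega)
      have := (hdir i (by omega)).not.mpr hup
      grind

namespace SimpleGraph

variable {V : Type} {G : SimpleGraph V}

theorem umNum_le_of_existsUnique_max {E : Set (Finset V)} {k : ℕ} (c : V → ℕ)
    (hc : ∀ u, c u < k) (h : ∀ e ∈ E, ∃! u, u ∈ e ∧ ∀ w ∈ e, c w ≤ c u) : umNum E ≤ k :=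
  Nat.sInf_le
    ⟨fun u => ⟨c u, hc u⟩, fun e he => by simpa only [Fin.mk_le_mk] using h e he⟩

theorem three_le_degree_of_adj {b a c x : V} [Fintype (G.neighborSet b)]
    (ha : G.Adj b a) (hc : G.Adj b c) (hx : G.Adj b x) (hac : a ≠ c) (hax : a ≠ x) (hcx : c ≠ x) :
    3 ≤ G.degree b := by
  rw [← card_neighborFinset_eq_degree]
  calc 3 = ({a, c, x} : Finset V).card :=
        (Finset.card_eq_three.mpr ⟨a, c, x, hac, hax, hcx, rfl⟩).symm
    _ ≤ _ := Finset.card_le_card (by simp [Finset.insert_subset_iff, ha, hc, hx])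

theorem Reachable.exists_isPath_length_eq_of_le_dist {u v : V} {k : ℕ} (h : G.Reachable u v)
    (hk : k ≤ G.dist u v) : ∃ (w : V) (p : G.Walk w v), p.IsPath ∧ p.length = k := by
  obtain ⟨p, hp, hlen⟩ := h.exists_path_of_dist
  exact ⟨_, p.drop (p.length - k), hp.drop _, by rw [Walk.drop_length]; omega⟩

theorem Walk.existsUnique_max_padicValNat {a b : V} (p : G.Walk a b) (f : V → ℕ) {d : ℕ}
    (hd : 0 < d) (h : ∀ i ≤ p.length, f (p.getVert i) = d + i) :
    ∃! u, u ∈ p.support.toFinset ∧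
      ∀ w ∈ p.support.toFinset, padicValNat 2 (f w) ≤ padicValNat 2 (f u) := by
  have hsupp : ∀ u, u ∈ p.support.toFinset ↔ ∃ i ≤ p.length, p.getVert i = u := by
    simp [Walk.mem_support_iff_exists_getVert, and_comm]
  apply Finset.existsUnique_max_comp_of_injOn
  · rintro _ hu _ hw huw
    obtain ⟨i, hi, rfl⟩ := (hsupp _).mp hu
    obtain ⟨j, hj, rfl⟩ := (hsupp _).mp hw
    rw [h i hi, h j hj, Nat.add_left_cancel_iff] at huw
    rw [huw]
  · have himage : p.support.toFinset.image f = Finset.Icc d (d + p.length) := by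
      ext m
      simp only [Finset.mem_image, hsupp, Finset.mem_Icc]
      constructor
      · rintro ⟨_, ⟨i, hi, rfl⟩, rfl⟩
        grind
      · intro hm
        exact ⟨_, ⟨m - d, by omega, rfl⟩, by grind⟩
    rw [himage]
    exact Nat.existsUnique_max_padicValNat_two_Icc hd (by omega)

namespace IsTree

variable (hT : G.IsTree) {r : V}
include hT

theorem eq_of_adj_of_dist_add_one {b x y : V} (hx : G.Adj x b) (hy : G.Adj y b)
    (hxd : G.dist r x + 1 = G.dist r b) (hyd : G.dist r y + 1 = G.dist r b) : x = y := by
  have hpath : ∀ z, G.Adj z b → G.dist r z + 1 = G.dist r b →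
      ∃ q : G.Walk r b, q.IsPath ∧ q.penultimate = z := by
    intro z hz hzd
    obtain ⟨p, hp, hlen⟩ := (hT.connected r z).exists_path_of_dist
    have hb : b ∉ p.support := fun hb => by
      have := dist_le (p.takeUntil b hb)
      have := p.length_takeUntil_le_length hb
      omega
    exact ⟨p.concat hz, hp.concat hb hz, Walk.penultimate_concat _ _⟩
  obtain ⟨qx, hqx, rfl⟩ := hpath x hx hxd
  obtain ⟨qy, hqy, rfl⟩ := hpath y hy hyd
  cases (hT.isAcyclic.subsingleton_path r b).elim ⟨qx, hqx⟩ ⟨qy, hqy⟩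
  rfl

theorem exists_adj_dist_add_one {b : V} (hb : b ≠ r) :
    ∃ x, G.Adj x b ∧ G.dist r x + 1 = G.dist r b := by
  obtain ⟨q, -, hlen⟩ := (hT.connected r b).exists_path_of_dist
  have hq : ¬ q.Nil := fun hnil => hb (hnil.eq).symm
  refine ⟨q.penultimate, q.adj_penultimate hq, ?_⟩
  have := dist_le q.dropLast
  have := Walk.length_dropLast q
  have := hT.dist_eq_dist_add_one_of_adj r (q.adj_penultimate hq)
  have := (hT.connected r b).pos_dist_of_ne hb.symm
  omega

variable [Fintype V]

theorem dist_succ_iff_of_adj_adj (hdeg : ∀ w, 3 ≤ G.degree w → w = r) {a b c : V}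
    (hab : G.Adj a b) (hbc : G.Adj b c) (hac : a ≠ c) (hbr : b ≠ r) :
    G.dist r b = G.dist r a + 1 ↔ G.dist r c = G.dist r b + 1 := by
  rcases hT.dist_eq_dist_add_one_of_adj r hab with hba | hab'
  <;> rcases hT.dist_eq_dist_add_one_of_adj r hbc with hbc' | hcb
  · omega
  · obtain ⟨x, hxb, hx⟩ := hT.exists_adj_dist_add_one hbr
    have := three_le_degree_of_adj hab.symm hbc hxb.symm hac (by grind) (by grind)
    exact absurd (hdeg b this) hbr
  · exact absurd (hT.eq_of_adj_of_dist_add_one hab hbc.symm hab'.symm hbc'.symm) hac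
  · omega

theorem dist_getVert_eq_add_or_add_eq (hdeg : ∀ w, 3 ≤ G.degree w → w = r) {a b : V}
    (p : G.Walk a b) (hp : p.IsPath) (hr : r ∉ p.support) :
    (∀ i ≤ p.length, G.dist r (p.getVert i) = G.dist r a + i) ∨
      (∀ i ≤ p.length, G.dist r (p.getVert i) + i = G.dist r a) := by
  have h0 : G.dist r (p.getVert 0) = G.dist r a := by rw [p.getVert_zero]
  rw [← h0]
  refine Nat.eq_add_or_add_eq_of_steps (s := fun i => G.dist r (p.getVert i))
    (fun i hi => (hT.dist_eq_dist_add_one_of_adj r (p.adj_getVert_succ hi)).symm)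
    (fun i hi => hT.dist_succ_iff_of_adj_adj hdeg (p.adj_getVert_succ (by omega))
      (p.adj_getVert_succ (by omega)) (fun h => ?_)
      (fun h => hr (h ▸ p.getVert_mem_support _)))
  have := hp.getVert_injOn (by simp only [Set.mem_ofPred_eq]; omega)
    (by simp only [Set.mem_ofPred_eq]; omega) h
  omega

theorem existsUnique_max_padicValNat_dist (hdeg : ∀ w, 3 ≤ G.degree w → w = r) {a b : V}
    (p : G.Walk a b) (hp : p.IsPath) (hr : r ∉ p.support) :
    ∃! u, u ∈ p.support.toFinset ∧
      ∀ w ∈ p.support.toFinset, padicValNat 2 (G.dist r w) ≤ padicValNat 2 (G.dist r u) := by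
  have hpos : ∀ u ∈ p.support, 0 < G.dist r u := fun u hu =>
    (hT.connected r u).pos_dist_of_ne fun h => hr (h ▸ hu)
  rcases hT.dist_getVert_eq_add_or_add_eq hdeg p hp hr with hinc | hdec
  · exact p.existsUnique_max_padicValNat _ (hpos a p.start_mem_support) hinc
  · have hlen := hdec p.length le_rfl
    rw [p.getVert_length] at hlen
    have := p.reverse.existsUnique_max_padicValNat (G.dist r ·) (hpos b p.end_mem_support)
      fun i hi => by
        rw [Walk.length_reverse] at hi
        have := hdec (p.length - i) (by omega)
        rw [Walk.getVert_reverse]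
        omega
    simpa [Walk.support_reverse] using this

theorem UM_le_of_forall_dist_lt (hdeg : ∀ w, 3 ≤ G.degree w → w = r) {l : ℕ}
    (hdist : ∀ u, G.dist r u < 2 ^ l) : UM G ≤ l + 1 := by
  set c : V → ℕ := fun u => if u = r then l else padicValNat 2 (G.dist r u)
  have hlt : ∀ u ≠ r, padicValNat 2 (G.dist r u) < l := fun u hu =>
    (padicValNat_le_nat_log _).trans_lt
      (Nat.log_lt_of_lt_pow ((hT.connected r u).pos_dist_of_ne hu.symm).ne' (hdist u))
  refine umNum_le_of_existsUnique_max c (fun u => ?_) ?_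
  · simp only [c]
    split_ifs with hu
    · omega
    · exact (hlt u hu).trans (Nat.lt_succ_self l)
  rintro _ ⟨x, y, p, hp, rfl⟩
  by_cases hr : r ∈ p.support
  · refine ⟨r, ⟨List.mem_toFinset.mpr hr, fun w _ => ?_⟩, fun u ⟨_, hmax⟩ => ?_⟩
    · simp only [c, if_pos rfl]
      split_ifs with hw
      · exact le_rfl
      · exact (hlt w hw).le
    · by_contra hu
      have := hmax r (List.mem_toFinset.mpr hr)
      simp only [c, if_pos rfl, if_neg hu] at this
      exact absurd (hlt u hu) (not_lt.mpr this)
  · have hc : ∀ w ∈ p.support.toFinset, c w = padicValNat 2 (G.dist r w) := fun w hw =>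
      if_neg fun h : w = r => hr (h ▸ List.mem_toFinset.mp hw)
    refine (existsUnique_congr fun u => and_congr_right fun hu =>
      forall₂_congr fun w hw => ?_).mpr (hT.existsUnique_max_padicValNat_dist hdeg p hp hr)
    rw [hc u hu, hc w hw]

end IsTree

end SimpleGraph

theorem stmt11_general {V : Type} [Fintype V] (l : ℕ)
    (T : SimpleGraph V) (hT : T.IsTree) (hcrit : UMCriticalK (l + 2) T)
    (v : V) (huniq : ∀ w, 3 ≤ T.degree w → w = v) :
    ∃ (u : V) (p : T.Walk u v), p.IsPath ∧ p.support.length = 2 ^ l := by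
  by_cases hfar : ∃ u, 2 ^ l - 1 ≤ T.dist u v
  · obtain ⟨u, hu⟩ := hfar
    obtain ⟨w, p, hp, hlen⟩ := (hT.connected u v).exists_isPath_length_eq_of_le_dist hu
    refine ⟨w, p, hp, ?_⟩
    rw [SimpleGraph.Walk.length_support, hlen]
    have : 1 ≤ 2 ^ l := Nat.one_le_two_pow
    omega
  · push Not at hfar
    have := hT.UM_le_of_forall_dist_lt huniq (l := l) fun u => by
      rw [SimpleGraph.dist_comm]
      have := hfar u
      omega
    have := hcrit.2
    omega

theorem stmt11 {V : Type} [Fintype V] (l : ℕ) (hl : 1 ≤ l)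
    (T : SimpleGraph V) (hT : T.IsTree) (hcrit : UMCriticalK (l + 2) T)
    (v : V) (hv : 3 ≤ T.degree v) (huniq : ∀ w, 3 ≤ T.degree w → w = v) :
    ∃ (u : V) (p : T.Walk u v), p.IsPath ∧ p.support.length = 2 ^ l :=
  stmt11_general l T hT hcrit v huniq
end
end

section
/- If a finite tree contains two non-adjacent vertices each of degree at least 3, then it contains a subdivision of the complete binary tree B_3 (with 3 levels and 7 vertices) as a subgraph. -/
open scoped Classical

noncomputable section

open SimpleGraph Walk

lemma aux_not_mem {V : Type} {T : SimpleGraph V} (hT : T.IsAcyclic)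
    {u v x a : V} (h1 : T.Adj u x) (q : T.Walk x v)
    (hp : (Walk.cons h1 q).IsPath) (ha : T.Adj u a) (hax : a ≠ x) :
    a ∉ (Walk.cons h1 q).support := by
  intro hmem
  have ht : ((Walk.cons h1 q).takeUntil a hmem).IsPath := hp.takeUntil _
  have hs : (SimpleGraph.Path.singleton ha : T.Walk u a)
      = (Walk.cons h1 q).takeUntil a hmem := by
    have := hT.path_unique (SimpleGraph.Path.singleton ha) ⟨_, ht⟩
    exact congrArg Subtype.val this
  have hspec := (Walk.cons h1 q).take_spec hmem
  rw [← hs] at hspec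
  have h2 := congrArg (fun w => w.getVert 1) hspec
  simp only [SimpleGraph.Path.singleton, Walk.cons_append, Walk.nil_append,
    Walk.getVert_cons_succ, Walk.getVert_zero] at h2
  exact hax h2

lemma list_lt3 (l : List Bool) (hl : l.length < 3) :
    l = [] ∨ l = [false] ∨ l = [true] ∨ l = [false,false] ∨ l = [true,false] ∨
      l = [false,true] ∨ l = [true,true] := by
  match l with
  | [] => tauto
  | [a] => cases a <;> tauto
  | [a,b] => cases a <;> cases b <;> tauto
  | _::_::_::_ => simp at hl; omega

def fB {V : Type} (x u v a b c d : V) : {l : List Bool // l.length < 3} → V := fun l =>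
  match l.1 with
  | [] => x
  | [false] => u
  | [true] => v
  | [false, false] => a
  | [true, false] => b
  | [false, true] => c
  | [true, true] => d
  | _ => x

lemma fB_inj {V : Type} (x u v a b c d : V)
    (h12 : x ≠ u) (h13 : x ≠ v) (h14 : x ≠ a) (h15 : x ≠ b) (h16 : x ≠ c) (h17 : x ≠ d)
    (h23 : u ≠ v) (h24 : u ≠ a) (h25 : u ≠ b) (h26 : u ≠ c) (h27 : u ≠ d)
    (h34 : v ≠ a) (h35 : v ≠ b) (h36 : v ≠ c) (h37 : v ≠ d)
    (h45 : a ≠ b) (h46 : a ≠ c) (h47 : a ≠ d)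
    (h56 : b ≠ c) (h57 : b ≠ d) (h67 : c ≠ d) :
    Function.Injective (fB x u v a b c d) := by
  rintro ⟨l1, hl1⟩ ⟨l2, hl2⟩ heq
  rcases list_lt3 l1 hl1 with rfl|rfl|rfl|rfl|rfl|rfl|rfl <;>
    rcases list_lt3 l2 hl2 with rfl|rfl|rfl|rfl|rfl|rfl|rfl <;>
    simp_all [fB]

def treeWalk {V : Type} {T : SimpleGraph V}
    (htp : ∀ s t : V, ∃ w : T.Walk s t, w.IsPath ∧ ∀ w' : T.Walk s t, w'.IsPath → w' = w)
    (s t : V) : T.Walk s t := (htp s t).choose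

lemma treeWalk_isPath {V : Type} {T : SimpleGraph V}
    (htp : ∀ s t : V, ∃ w : T.Walk s t, w.IsPath ∧ ∀ w' : T.Walk s t, w'.IsPath → w' = w)
    (s t : V) : (treeWalk htp s t).IsPath := (htp s t).choose_spec.1

lemma treeWalk_uniq {V : Type} {T : SimpleGraph V}
    (htp : ∀ s t : V, ∃ w : T.Walk s t, w.IsPath ∧ ∀ w' : T.Walk s t, w'.IsPath → w' = w)
    (s t : V) (w : T.Walk s t) (hw : w.IsPath) : w = treeWalk htp s t :=
  (htp s t).choose_spec.2 w hw

set_option maxHeartbeats 2000000 in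
theorem stmt12 {V : Type} [Fintype V] (T : SimpleGraph V) (hT : T.IsTree)
    (u v : V) (huv : u ≠ v) (hadj : ¬ T.Adj u v)
    (hu : 3 ≤ T.degree u) (hv : 3 ≤ T.degree v) :
    ContainsSubdivision (binaryTree 3) T := by
  classical
  have htp : ∀ s t : V, ∃ w : T.Walk s t, w.IsPath ∧ ∀ w' : T.Walk s t, w'.IsPath → w' = w := by
    intro s t
    obtain ⟨p, hp, hun⟩ := hT.existsUnique_path s t
    exact ⟨p, hp, hun⟩
  have puniq : ∀ {s t : V} (p₁ p₂ : T.Walk s t), p₁.IsPath → p₂.IsPath → p₁ = p₂ := by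
    intro s t p₁ p₂ hh1 hh2
    rw [treeWalk_uniq htp s t p₁ hh1, treeWalk_uniq htp s t p₂ hh2]
  obtain ⟨p, hp⟩ : ∃ p : T.Walk u v, p.IsPath := ⟨treeWalk htp u v, treeWalk_isPath htp u v⟩
  cases p with
  | nil => exact absurd rfl huv
  | @cons _ x _ h1 q =>
  have hq : q.IsPath ∧ u ∉ q.support := (Walk.cons_isPath_iff _ _).mp hp
  have hxv : x ≠ v := fun h => hadj (h ▸ h1)
  have hux : u ≠ x := h1.ne
  have hx_mem : x ∈ T.neighborFinset u := (T.mem_neighborFinset u x).mpr h1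
  have hcard : 1 < ((T.neighborFinset u).erase x).card := by
    rw [Finset.card_erase_of_mem hx_mem]
    have : (T.neighborFinset u).card = T.degree u := T.card_neighborFinset_eq_degree u
    omega
  obtain ⟨a, ha', b, hb', hab⟩ := Finset.one_lt_card.mp hcard
  have hax : a ≠ x := Finset.ne_of_mem_erase ha'
  have hbx : b ≠ x := Finset.ne_of_mem_erase hb'
  have hua : T.Adj u a := (T.mem_neighborFinset u a).mp (Finset.mem_of_mem_erase ha')
  have hub : T.Adj u b := (T.mem_neighborFinset u b).mp (Finset.mem_of_mem_erase hb')
  have haS : a ∉ (Walk.cons h1 q).support := aux_not_mem hT.2 h1 q hp hua hax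
  have hbS : b ∉ (Walk.cons h1 q).support := aux_not_mem hT.2 h1 q hp hub hbx
  obtain ⟨r, hr, hrs⟩ : ∃ r : T.Walk v u, r.IsPath ∧
      ∀ w, w ∈ r.support ↔ w ∈ (Walk.cons h1 q).support :=
    ⟨(Walk.cons h1 q).reverse, hp.reverse, by intro w; rw [Walk.support_reverse, List.mem_reverse]⟩
  cases r with
  | nil => exact absurd rfl huv.symm
  | @cons _ y _ h2 r2 =>
  have hy_mem : y ∈ T.neighborFinset v := (T.mem_neighborFinset v y).mpr h2
  have hcard2 : 1 < ((T.neighborFinset v).erase y).card := by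
    rw [Finset.card_erase_of_mem hy_mem]
    have : (T.neighborFinset v).card = T.degree v := T.card_neighborFinset_eq_degree v
    omega
  obtain ⟨c, hc', d, hd', hcd⟩ := Finset.one_lt_card.mp hcard2
  have hvc : T.Adj v c := (T.mem_neighborFinset v c).mp (Finset.mem_of_mem_erase hc')
  have hvd : T.Adj v d := (T.mem_neighborFinset v d).mp (Finset.mem_of_mem_erase hd')
  have hcS : c ∉ (Walk.cons h1 q).support := by
    rw [← hrs]
    exact aux_not_mem hT.2 h2 r2 hr hvc (Finset.ne_of_mem_erase hc')
  have hdS : d ∉ (Walk.cons h1 q).support := by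
    rw [← hrs]
    exact aux_not_mem hT.2 h2 r2 hr hvd (Finset.ne_of_mem_erase hd')
  have huS : u ∈ (Walk.cons h1 q).support := by simp
  have hxS : x ∈ (Walk.cons h1 q).support := by simp [Walk.support_cons, q.start_mem_support]
  have hvS : v ∈ (Walk.cons h1 q).support := by simp [Walk.support_cons, q.end_mem_support]
  have hqS : ∀ w, w ∈ q.support → w ∈ (Walk.cons h1 q).support := by
    intro w hw; simp [Walk.support_cons, hw]
  have key2 : ∀ z, T.Adj u z → T.Adj v z → z ∉ (Walk.cons h1 q).support → False := by
    intro z hz1 hz2 hzS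
    have hzv : z ≠ v := fun h => hzS (h ▸ hvS)
    have hw2 : (Walk.cons hz1 (Walk.cons hz2.symm Walk.nil)).IsPath := by
      simp [Walk.cons_isPath_iff, hz1.ne, huv, hzv]
    have := puniq _ _ hw2 hp
    apply hzS
    rw [← this]
    simp
  have hac : a ≠ c := fun h => key2 a hua (h ▸ hvc) haS
  have had : a ≠ d := fun h => key2 a hua (h ▸ hvd) haS
  have hbc : b ≠ c := fun h => key2 b hub (h ▸ hvc) hbS
  have hbd : b ≠ d := fun h => key2 b hub (h ▸ hvd) hbS
  have hxu : x ≠ u := hux.symm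
  have hxa : x ≠ a := fun h => haS (h ▸ hxS)
  have hxb : x ≠ b := fun h => hbS (h ▸ hxS)
  have hxc : x ≠ c := fun h => hcS (h ▸ hxS)
  have hxd : x ≠ d := fun h => hdS (h ▸ hxS)
  have huaN : u ≠ a := hua.ne
  have hubN : u ≠ b := hub.ne
  have huc : u ≠ c := fun h => hcS (h ▸ huS)
  have hud : u ≠ d := fun h => hdS (h ▸ huS)
  have hva : v ≠ a := fun h => haS (h ▸ hvS)
  have hvb : v ≠ b := fun h => hbS (h ▸ hvS)
  have hvcN : v ≠ c := hvc.ne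
  have hvdN : v ≠ d := hvd.ne
  have mem_x : x ∈ Set.range (fB x u v a b c d) := ⟨⟨[], by decide⟩, rfl⟩
  have mem_u : u ∈ Set.range (fB x u v a b c d) := ⟨⟨[false], by decide⟩, rfl⟩
  have mem_v : v ∈ Set.range (fB x u v a b c d) := ⟨⟨[true], by decide⟩, rfl⟩
  have mem_a : a ∈ Set.range (fB x u v a b c d) := ⟨⟨[false,false], by decide⟩, rfl⟩
  have mem_b : b ∈ Set.range (fB x u v a b c d) := ⟨⟨[true,false], by decide⟩, rfl⟩
  have mem_c : c ∈ Set.range (fB x u v a b c d) := ⟨⟨[false,true], by decide⟩, rfl⟩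
  have mem_d : d ∈ Set.range (fB x u v a b c d) := ⟨⟨[true,true], by decide⟩, rfl⟩
  have E_xu : treeWalk htp x u = Walk.cons h1.symm Walk.nil :=
    (treeWalk_uniq htp x u _ (SimpleGraph.Path.singleton h1.symm).2).symm
  have E_ux : treeWalk htp u x = Walk.cons h1 Walk.nil :=
    (treeWalk_uniq htp u x _ (SimpleGraph.Path.singleton h1).2).symm
  have E_xv : treeWalk htp x v = q := (treeWalk_uniq htp x v q hq.1).symm
  have E_vx : treeWalk htp v x = q.reverse := (treeWalk_uniq htp v x q.reverse hq.1.reverse).symm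
  have E_ua : treeWalk htp u a = Walk.cons hua Walk.nil :=
    (treeWalk_uniq htp u a _ (SimpleGraph.Path.singleton hua).2).symm
  have E_au : treeWalk htp a u = Walk.cons hua.symm Walk.nil :=
    (treeWalk_uniq htp a u _ (SimpleGraph.Path.singleton hua.symm).2).symm
  have E_ub : treeWalk htp u b = Walk.cons hub Walk.nil :=
    (treeWalk_uniq htp u b _ (SimpleGraph.Path.singleton hub).2).symm
  have E_bu : treeWalk htp b u = Walk.cons hub.symm Walk.nil :=
    (treeWalk_uniq htp b u _ (SimpleGraph.Path.singleton hub.symm).2).symm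
  have E_vc : treeWalk htp v c = Walk.cons hvc Walk.nil :=
    (treeWalk_uniq htp v c _ (SimpleGraph.Path.singleton hvc).2).symm
  have E_cv : treeWalk htp c v = Walk.cons hvc.symm Walk.nil :=
    (treeWalk_uniq htp c v _ (SimpleGraph.Path.singleton hvc.symm).2).symm
  have E_vd : treeWalk htp v d = Walk.cons hvd Walk.nil :=
    (treeWalk_uniq htp v d _ (SimpleGraph.Path.singleton hvd).2).symm
  have E_dv : treeWalk htp d v = Walk.cons hvd.symm Walk.nil :=
    (treeWalk_uniq htp d v _ (SimpleGraph.Path.singleton hvd.symm).2).symm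
  have edge_int : ∀ (α β : V) (hαβ : T.Adj α β), treeWalk htp α β = Walk.cons hαβ Walk.nil →
      ∀ w : V, w ∈ (treeWalk htp α β).support → w ≠ α → w ≠ β → False := by
    intro α β hαβ E w hw hwα hwβ
    rw [E] at hw
    simp at hw
    tauto
  have edge_rng : ∀ (α β : V) (hαβ : T.Adj α β), treeWalk htp α β = Walk.cons hαβ Walk.nil →
      α ∈ Set.range (fB x u v a b c d) → β ∈ Set.range (fB x u v a b c d) →
      ∀ w : V, w ∈ (treeWalk htp α β).support → w ∈ Set.range (fB x u v a b c d) := by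
    intro α β hαβ E hα hβ w hw
    rw [E] at hw
    simp at hw
    rcases hw with rfl | rfl
    · exact hα
    · exact hβ
  have q_rng : ∀ w : V, w ∈ q.support → w ≠ x → w ≠ v →
      w ∉ Set.range (fB x u v a b c d) := by
    rintro w hw hwx hwv ⟨⟨l, hl⟩, rfl⟩
    rcases list_lt3 l hl with rfl|rfl|rfl|rfl|rfl|rfl|rfl
    · exact hwx rfl
    · exact hq.2 hw
    · exact hwv rfl
    · exact haS (hqS _ hw)
    · exact hbS (hqS _ hw)
    · exact hcS (hqS _ hw)
    · exact hdS (hqS _ hw)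
  have edge_all : ∀ (l1 l2 : {l : List Bool // l.length < 3}) (h : (binaryTree 3).Adj l1 l2),
      s(l1, l2) ≠ s((⟨[], by decide⟩ : {l : List Bool // l.length < 3}), ⟨[true], by decide⟩) →
      ∀ w : V, w ∈ (treeWalk htp (fB x u v a b c d l1) (fB x u v a b c d l2)).support →
        w ∈ Set.range (fB x u v a b c d) := by
    rintro ⟨l1, hl1⟩ ⟨l2, hl2⟩ h hc w hw
    rcases list_lt3 l1 hl1 with rfl|rfl|rfl|rfl|rfl|rfl|rfl <;>
      rcases list_lt3 l2 hl2 with rfl|rfl|rfl|rfl|rfl|rfl|rfl <;>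
      first
      | (clear hw; revert h; simp [binaryTree, SimpleGraph.fromRel_adj]; done)
      | exact edge_rng x u h1.symm E_xu mem_x mem_u w hw
      | exact edge_rng u x h1 E_ux mem_u mem_x w hw
      | exact edge_rng u a hua E_ua mem_u mem_a w hw
      | exact edge_rng a u hua.symm E_au mem_a mem_u w hw
      | exact edge_rng u b hub E_ub mem_u mem_b w hw
      | exact edge_rng b u hub.symm E_bu mem_b mem_u w hw
      | exact edge_rng v c hvc E_vc mem_v mem_c w hw
      | exact edge_rng c v hvc.symm E_cv mem_c mem_v w hw
      | exact edge_rng v d hvd E_vd mem_v mem_d w hw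
      | exact edge_rng d v hvd.symm E_dv mem_d mem_v w hw
      | exact absurd rfl hc
      | exact absurd Sym2.eq_swap hc
  refine ⟨fB x u v a b c d,
    fun l1 l2 _ => treeWalk htp (fB x u v a b c d l1) (fB x u v a b c d l2),
    fB_inj x u v a b c d hxu hxv hxa hxb hxc hxd huv huaN hubN huc hud hva hvb hvcN hvdN
      hab hac had hbc hbd hcd,
    fun _ _ _ => treeWalk_isPath htp _ _,
    fun l1 l2 h => (treeWalk_uniq htp _ _ _
      ((treeWalk_isPath htp (fB x u v a b c d l1) (fB x u v a b c d l2)).reverse)).symm,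
    ?_, ?_⟩
  · rintro ⟨l1, hl1⟩ ⟨l2, hl2⟩ h w hw hne1 hne2
    rcases list_lt3 l1 hl1 with rfl|rfl|rfl|rfl|rfl|rfl|rfl <;>
      rcases list_lt3 l2 hl2 with rfl|rfl|rfl|rfl|rfl|rfl|rfl <;>
      first
      | (clear hw; revert h; simp [binaryTree, SimpleGraph.fromRel_adj]; done)
      | exact (edge_int x u h1.symm E_xu w hw hne1 hne2).elim
      | exact (edge_int u x h1 E_ux w hw hne1 hne2).elim
      | exact (edge_int u a hua E_ua w hw hne1 hne2).elim
      | exact (edge_int a u hua.symm E_au w hw hne1 hne2).elim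
      | exact (edge_int u b hub E_ub w hw hne1 hne2).elim
      | exact (edge_int b u hub.symm E_bu w hw hne1 hne2).elim
      | exact (edge_int v c hvc E_vc w hw hne1 hne2).elim
      | exact (edge_int c v hvc.symm E_cv w hw hne1 hne2).elim
      | exact (edge_int v d hvd E_vd w hw hne1 hne2).elim
      | exact (edge_int d v hvd.symm E_dv w hw hne1 hne2).elim
      | (have hw2 : w ∈ q.support := by
           have hw' : w ∈ (treeWalk htp x v).support := hw
           rw [E_xv] at hw'
           exact hw'
         exact q_rng w hw2 hne1 hne2)
      | (have hw2 : w ∈ q.support := by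
           have hw' : w ∈ (treeWalk htp v x).support := hw
           rw [E_vx] at hw'
           simpa using hw'
         exact q_rng w hw2 hne2 hne1)
  · intro l1 l2 h l1' l2' h' hne w hw hw'
    by_cases hc : s(l1, l2) =
        s((⟨[], by decide⟩ : {l : List Bool // l.length < 3}), ⟨[true], by decide⟩)
    · refine edge_all l1' l2' h' ?_ w hw'
      rw [hc] at hne
      exact fun hcc => hne hcc.symm
    · exact edge_all l1 l2 h hc w hw
end
end

section
/- For every [k,d,n] prefix set-free family F, one has 2^d ≤ Σ_{i=k}^{n} C(n,i), where C(n,i) is the binomial coefficient; equivalently, d ≤ log₂ Σ_{i=k}^{n} C(n,i). -/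
open scoped Classical

noncomputable section

/-!
Taking the whole member as the prefix, the prefix set-free condition makes `List.toFinset`
injective on the family; since members have distinct entries and length at least `k`, their
underlying sets are distinct subsets of `Fin n` of size at least `k`.
-/

open Finset

theorem Finset.card_powerset_filter_le_card_eq_sum_choose {α : Type*} (s : Finset α) (k : ℕ) :
    #{t ∈ s.powerset | k ≤ #t} = ∑ i ∈ Icc k #s, (#s).choose i := by
  rw [card_filter, sum_powerset_apply_card (fun m => if k ≤ m then 1 else 0)]
  simp only [smul_eq_mul, mul_ite, mul_one, mul_zero]
  rw [← sum_filter]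
  congr 1
  ext i
  simp only [mem_filter, mem_range, mem_Icc]
  omega

theorem IsPSF.injOn_toFinset {n : ℕ} {F : Finset (List (Fin n))} (hF : IsPSF F) :
    Set.InjOn List.toFinset (F : Set (List (Fin n))) := by
  intro A hA B hB hAB
  by_contra hne
  rcases eq_or_ne A [] with rfl | hA0
  · exact hne (List.toFinset_eq_empty_iff B |>.mp hAB.symm).symm
  · exact hF.2 A hA B hB hne A hA0 List.prefix_rfl hAB

theorem stmt16 (k d n : ℕ) (F : Finset (List (Fin n))) (hF : IsPSFFamily k d n F) :
    2 ^ d ≤ ∑ i ∈ Finset.Icc k n, n.choose i := by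
  obtain ⟨hpsf, hlen, hcard⟩ := hF
  have himage : F.image List.toFinset ⊆ {S ∈ (univ : Finset (Fin n)).powerset | k ≤ #S} := by
    intro S hS
    obtain ⟨l, hl, rfl⟩ := mem_image.mp hS
    rw [mem_filter, mem_powerset, List.toFinset_card_of_nodup (hpsf.1 l hl)]
    exact ⟨subset_univ _, hlen l hl⟩
  calc 2 ^ d ≤ #F := hcard
    _ = #(F.image List.toFinset) := (card_image_of_injOn hpsf.injOn_toFinset).symm
    _ ≤ #{S ∈ (univ : Finset (Fin n)).powerset | k ≤ #S} := card_le_card himage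
    _ = ∑ i ∈ Icc k n, n.choose i := by
      rw [card_powerset_filter_le_card_eq_sum_choose, card_univ, Fintype.card_fin]
end
end

section
/- For all n ≥ 1 and 1 ≤ k ≤ n, there exists a [k, d, n] prefix set-free family with d = ⌊log₂ C(n,k)⌋, where C(n,k) is the binomial coefficient; moreover every sequence of this family has length exactly k. -/
open scoped Classical

noncomputable section

/-! Take `2 ^ d` of the `k`-subsets of `Fin n`, each listed in increasing order. All members
have length `k`, so a prefix with the underlying set of a member (which has `k` elements) is
the whole list; distinct subsets then cannot collide. -/

theorem isPSF_of_length_eq {n k : ℕ} {F : Finset (List (Fin n))}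
    (hnodup : ∀ l ∈ F, l.Nodup) (hlength : ∀ l ∈ F, l.length = k)
    (hinj : Set.InjOn List.toFinset (F : Set (List (Fin n)))) : IsPSF F := by
  refine ⟨hnodup, fun A hA B hB hAB p _ hpA hpB => hAB ?_⟩
  have hp_length : p.length = A.length := by
    rw [← List.toFinset_card_of_nodup ((hnodup A hA).sublist hpA.sublist), hpB,
      List.toFinset_card_of_nodup (hnodup B hB), hlength A hA, hlength B hB]
  rw [hpA.eq_of_length hp_length] at hpB
  exact hinj hA hB hpB

theorem finset_sort_injective (n : ℕ) :
    Function.Injective fun s : Finset (Fin n) => s.sort (· ≤ ·) := fun a b hab => by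
  simpa only [Finset.sort_toFinset] using congrArg List.toFinset hab

theorem length_of_mem_image_sort {n k : ℕ} {S : Finset (Finset (Fin n))}
    (hS : ∀ s ∈ S, s.card = k) :
    ∀ l ∈ S.image fun s => s.sort (· ≤ ·), l.length = k := by
  simp only [Finset.mem_image]
  rintro _ ⟨s, hs, rfl⟩
  rw [Finset.length_sort, hS s hs]

theorem isPSF_image_sort {n k : ℕ} {S : Finset (Finset (Fin n))}
    (hS : ∀ s ∈ S, s.card = k) : IsPSF (S.image fun s => s.sort (· ≤ ·)) := by
  refine isPSF_of_length_eq ?_ (length_of_mem_image_sort hS) ?_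
  · simp only [Finset.mem_image]
    rintro _ ⟨s, -, rfl⟩
    exact Finset.sort_nodup _ _
  · simp only [Finset.coe_image]
    rintro _ ⟨a, -, rfl⟩ _ ⟨b, -, rfl⟩ hab
    simp only [Finset.sort_toFinset] at hab
    rw [hab]

theorem stmt17_general (n k : ℕ) (hkn : k ≤ n) :
    ∃ F : Finset (List (Fin n)),
      IsPSFFamily k (Nat.log 2 (n.choose k)) n F ∧ ∀ l ∈ F, l.length = k := by
  have hpow :
      2 ^ Nat.log 2 (n.choose k) ≤ ((Finset.univ : Finset (Fin n)).powersetCard k).card := by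
    rw [Finset.card_powersetCard, Finset.card_univ, Fintype.card_fin]
    exact Nat.pow_log_le_self 2 (Nat.choose_pos hkn).ne'
  obtain ⟨S, hS_sub, hS_card⟩ := Finset.exists_subset_card_eq hpow
  have hS : ∀ s ∈ S, s.card = k := fun s hs => Finset.mem_powersetCard_univ.mp (hS_sub hs)
  have hlength := length_of_mem_image_sort hS
  refine ⟨_, ⟨isPSF_image_sort hS, fun l hl => (hlength l hl).ge, ?_⟩, hlength⟩
  rw [Finset.card_image_of_injective _ (finset_sort_injective n), hS_card]

theorem stmt17 (n k : ℕ) (hn : 1 ≤ n) (hk1 : 1 ≤ k) (hkn : k ≤ n) :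
    ∃ F : Finset (List (Fin n)),
      IsPSFFamily k (Nat.log 2 (n.choose k)) n F ∧ ∀ l ∈ F, l.length = k :=
  stmt17_general n k hkn
end
end

section
/- If there exists a [k,d,n] prefix set-free family in which every sequence has length at most k + d, then for every r ≥ 1, CF(B_{d(r+1)+kr}) ≤ nr + d. -/
open scoped Classical

noncomputable section

namespace Stmt18

/-- longest common prefix -/
def cp : List Bool → List Bool → List Bool
  | a :: l, b :: l' => if a = b then a :: cp l l' else []
  | _, _ => []

lemma cp_prefix_left : ∀ l l', cp l l' <+: l
  | [], _ => by simp [cp]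
  | a :: l, [] => by simp [cp]
  | a :: l, b :: l' => by
    by_cases h : a = b
    · simp [cp, h, List.cons_prefix_cons, cp_prefix_left l l']
    · simp [cp, h]

lemma cp_prefix_right : ∀ l l', cp l l' <+: l'
  | [], _ => by simp [cp]
  | a :: l, [] => by simp [cp]
  | a :: l, b :: l' => by
    by_cases h : a = b
    · subst h; simp [cp, List.cons_prefix_cons, cp_prefix_right l l']
    · simp [cp, h]

lemma prefix_cp : ∀ p l l', p <+: l → p <+: l' → p <+: cp l l'
  | [], _, _, _, _ => by simp
  | c :: p, a :: l, b :: l', h1, h2 => by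
    obtain ⟨t1, ht1⟩ := h1
    obtain ⟨t2, ht2⟩ := h2
    simp only [List.cons_append] at ht1 ht2
    have hca : c = a := (List.cons.injEq _ _ _ _ ▸ ht1).1
    have hcb : c = b := (List.cons.injEq _ _ _ _ ▸ ht2).1
    have hl : p <+: l := ⟨t1, (List.cons.injEq _ _ _ _ ▸ ht1).2⟩
    have hl' : p <+: l' := ⟨t2, (List.cons.injEq _ _ _ _ ▸ ht2).2⟩
    subst hca
    have hab : c = b := hcb
    simp [cp, ← hab, List.cons_prefix_cons, prefix_cp p l l' hl hl']
  | c :: p, [], _, h1, _ => by simp at h1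
  | c :: p, a :: l, [], _, h2 => by simp at h2

lemma cp_self : ∀ l, cp l l = l
  | [] => by simp [cp]
  | a :: l => by simp [cp, cp_self l]

/-- longest common suffix -/
def lcs (u v : List Bool) : List Bool := (cp u.reverse v.reverse).reverse

lemma lcs_suffix_left (u v : List Bool) : lcs u v <:+ u := by
  have := cp_prefix_left u.reverse v.reverse
  rw [← List.reverse_suffix] at this
  simpa [lcs] using this

lemma lcs_suffix_right (u v : List Bool) : lcs u v <:+ v := by
  have := cp_prefix_right u.reverse v.reverse
  rw [← List.reverse_suffix] at this
  simpa [lcs] using this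

lemma suffix_lcs {x u v : List Bool} (h1 : x <:+ u) (h2 : x <:+ v) : x <:+ lcs u v := by
  rw [← List.reverse_prefix] at h1 h2
  have := prefix_cp _ _ _ h1 h2
  rw [← List.reverse_prefix]
  simpa [lcs] using this

lemma lcs_self (u : List Bool) : lcs u u = u := by simp [lcs, cp_self]

lemma suffix_total {x y z : List Bool} (h1 : x <:+ z) (h2 : y <:+ z) : x <:+ y ∨ y <:+ x := by
  rw [← List.reverse_prefix] at h1 h2 ⊢
  rw [← List.reverse_prefix (l₂ := x)]
  exact List.prefix_or_prefix_of_prefix h1 h2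

lemma suffix_of_suffix_length_le {x y z : List Bool} (h1 : x <:+ z) (h2 : y <:+ z)
    (h : x.length ≤ y.length) : x <:+ y := by
  rcases suffix_total h1 h2 with h' | h'
  · exact h'
  · rw [h'.eq_of_length (le_antisymm h'.length_le h)]

lemma suffix_eq_of_length {x y z : List Bool} (h1 : x <:+ z) (h2 : y <:+ z)
    (h : x.length = y.length) : x = y :=
  (suffix_of_suffix_length_le h1 h2 h.le).eq_of_length h

lemma suffix_antisymm {x y : List Bool} (h1 : x <:+ y) (h2 : y <:+ x) : x = y :=
  h1.eq_of_length (le_antisymm h1.length_le h2.length_le)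

/-- membership predicate for the path between u and v -/
def memP (u v x : List Bool) : Prop :=
  (lcs u v).length ≤ x.length ∧ (x <:+ u ∨ x <:+ v)

lemma memP_comm {u v x : List Bool} : memP u v x ↔ memP v u x := by
  have h : lcs u v = lcs v u :=
    suffix_antisymm (suffix_lcs (lcs_suffix_right u v) (lcs_suffix_left u v))
      (suffix_lcs (lcs_suffix_right v u) (lcs_suffix_left v u))
  unfold memP
  rw [h]; tauto

lemma memP_self_iff {u x : List Bool} : memP u u x ↔ x = u := by
  constructor
  · rintro ⟨h1, h2 | h2⟩ <;>
    · rw [lcs_self] at h1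
      exact h2.eq_of_length (le_antisymm h2.length_le h1)
  · intro h
    subst h
    exact ⟨by rw [lcs_self], Or.inl (List.suffix_refl x)⟩

lemma step_iff {u w v : List Bool} (hadj : (∃ b, w = b :: u) ∨ (∃ b, u = b :: w))
    (hu : ¬ memP w v u) : ∀ x, memP u v x ↔ (x = u ∨ memP w v x) := by
  rcases hadj with ⟨b, rfl⟩ | ⟨b, rfl⟩
  · -- w = b :: u : u is the parent of w
    -- from hu : ¬ (|lcs w v| ≤ |u| ∧ (u <:+ w ∨ u <:+ v)), and u <:+ w holds
    have husw : u <:+ b :: u := List.suffix_cons b u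
    have hlen : ¬ ((lcs (b :: u) v).length ≤ u.length) := by
      intro hle
      exact hu ⟨hle, Or.inl husw⟩
    have hlcsw : lcs (b :: u) v = b :: u := by
      have h1 := lcs_suffix_left (b :: u) v
      refine h1.eq_of_length (le_antisymm h1.length_le ?_)
      have := h1.length_le
      simp only [List.length_cons] at this ⊢
      omega
    have hwv : (b :: u) <:+ v := hlcsw ▸ lcs_suffix_right (b :: u) v
    have huv : u <:+ v := husw.trans hwv
    have hlcsu : lcs u v = u :=
      suffix_antisymm (lcs_suffix_left u v) (suffix_lcs (List.suffix_refl u) huv)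
    intro x
    constructor
    · rintro ⟨h1, h2 | h2⟩
      · left; exact h2.eq_of_length (le_antisymm h2.length_le (hlcsu ▸ h1))
      · rw [hlcsu] at h1
        rcases Nat.eq_or_lt_of_le h1 with heq | hlt
        · left; exact suffix_eq_of_length h2 huv heq.symm
        · right
          refine ⟨?_, Or.inr h2⟩
          rw [hlcsw]; simpa using hlt
    · rintro (rfl | ⟨h1, h2 | h2⟩)
      · exact ⟨by rw [hlcsu], Or.inl (List.suffix_refl x)⟩
      · exact ⟨by rw [hlcsu]; have := h1; rw [hlcsw] at this; simp at this; omega,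
          Or.inr (h2.trans hwv)⟩
      · exact ⟨by rw [hlcsu]; rw [hlcsw] at h1; simp at h1; omega, Or.inr h2⟩
  · -- u = b :: w : u is a child of w
    have hwsu : w <:+ b :: w := List.suffix_cons b w
    have hnuv : ¬ ((b :: w) <:+ v) := by
      intro hv
      apply hu
      refine ⟨?_, Or.inr hv⟩
      have := (lcs_suffix_left w v).length_le
      simp only [List.length_cons]; omega
    have hlcs : lcs (b :: w) v = lcs w v := by
      have h1 : lcs (b :: w) v <:+ w := by
        rcases List.suffix_cons_iff.mp (lcs_suffix_left (b :: w) v) with h | h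
        · exact absurd (h ▸ lcs_suffix_right (b :: w) v) hnuv
        · exact h
      exact suffix_antisymm (suffix_lcs h1 (lcs_suffix_right (b :: w) v))
        (suffix_lcs ((lcs_suffix_left w v).trans hwsu) (lcs_suffix_right w v))
    intro x
    constructor
    · rintro ⟨h1, h2 | h2⟩
      · rcases List.suffix_cons_iff.mp h2 with h | h
        · left; exact h
        · right; exact ⟨hlcs ▸ h1, Or.inl h⟩
      · right; exact ⟨hlcs ▸ h1, Or.inr h2⟩
    · rintro (rfl | ⟨h1, h2 | h2⟩)
      · exact ⟨(lcs_suffix_left (b :: w) v).length_le, Or.inl (List.suffix_refl _)⟩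
      · exact ⟨hlcs.symm ▸ h1, Or.inl (h2.trans hwsu)⟩
      · exact ⟨hlcs.symm ▸ h1, Or.inr h2⟩

lemma support_iff {D : ℕ} {u v : {l : List Bool // l.length < D}}
    (p : (binaryTree D).Walk u v) (hp : p.IsPath) :
    ∀ x, x ∈ p.support ↔ memP u.1 v.1 x.1 := by
  induction p with
  | nil =>
    intro x
    simp only [SimpleGraph.Walk.support_nil, List.mem_singleton, memP_self_iff]
    exact ⟨fun h => by rw [h], fun h => Subtype.ext h⟩
  | @cons a w c h q ih =>
    rw [SimpleGraph.Walk.cons_isPath_iff] at hp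
    have ihq := ih hp.1
    have hadj : (∃ bit, w.1 = bit :: a.1) ∨ (∃ bit, a.1 = bit :: w.1) := by
      have := (SimpleGraph.fromRel_adj _ _ _).mp h
      exact this.2
    have hnot : ¬ memP w.1 c.1 a.1 := fun hc => hp.2 ((ihq a).mpr hc)
    intro x
    rw [SimpleGraph.Walk.support_cons, List.mem_cons, ihq, step_iff hadj hnot x.1]
    constructor
    · rintro (rfl | h)
      · exact Or.inl rfl
      · exact Or.inr h
    · rintro (h | h)
      · exact Or.inl (Subtype.ext h)
      · exact Or.inr h



def bin : List Bool → ℕ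
  | [] => 0
  | b :: w => b.toNat + 2 * bin w

lemma bin_lt : ∀ w : List Bool, bin w < 2 ^ w.length
  | [] => by simp [bin]
  | b :: w => by
    have := bin_lt w
    cases b <;> simp [bin, pow_succ] <;> omega

lemma bin_inj : ∀ w w' : List Bool, w.length = w'.length → bin w = bin w' → w = w'
  | [], [], _, _ => rfl
  | b :: w, b' :: w', hl, hb => by
    simp only [List.length_cons, Nat.succ_inj] at hl
    simp only [bin] at hb
    have hbb : b = b' ∧ bin w = bin w' := by cases b <;> cases b' <;> simp_all <;> omega
    rw [hbb.1, bin_inj w w' hl hbb.2]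
  | [], _ :: _, hl, _ => by simp at hl
  | _ :: _, [], hl, _ => by simp at hl

def seqF (n : ℕ) (F : Finset (List (Fin n))) (w : List Bool) : List (Fin n) :=
  F.toList.getD (bin w) []

lemma seqF_mem {n : ℕ} {F : Finset (List (Fin n))} {d : ℕ} (hcard : 2 ^ d ≤ F.card)
    {w : List Bool} (hw : w.length = d) : seqF n F w ∈ F := by
  have hlt : bin w < F.toList.length := by
    rw [Finset.length_toList]
    exact lt_of_lt_of_le (hw ▸ bin_lt w) hcard
  rw [seqF, List.getD_eq_getElem _ _ hlt]
  exact Finset.mem_toList.mp (List.getElem_mem hlt)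

lemma seqF_inj {n : ℕ} {F : Finset (List (Fin n))} {d : ℕ} (hcard : 2 ^ d ≤ F.card)
    {w w' : List Bool} (hw : w.length = d) (hw' : w'.length = d)
    (h : seqF n F w = seqF n F w') : w = w' := by
  have hlt : bin w < F.toList.length := by
    rw [Finset.length_toList]; exact lt_of_lt_of_le (hw ▸ bin_lt w) hcard
  have hlt' : bin w' < F.toList.length := by
    rw [Finset.length_toList]; exact lt_of_lt_of_le (hw' ▸ bin_lt w') hcard
  rw [seqF, seqF, List.getD_eq_getElem _ _ hlt, List.getD_eq_getElem _ _ hlt'] at h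
  exact bin_inj w w' (hw.trans hw'.symm) (F.nodup_toList.getElem_inj_iff.mp h)

def off (k d : ℕ) (x : List Bool) : ℕ := (x.length - d) % (k + d)

def blk (k d : ℕ) (x : List Bool) : ℕ := (x.length - d) / (k + d)

def seqA (k d n : ℕ) (F : Finset (List (Fin n))) (x : List Bool) : List (Fin n) :=
  seqF n F ((x.drop (off k d x)).take d)

def colo (k d n r : ℕ) (F : Finset (List (Fin n))) (x : List Bool) : ℕ :=
  if x.length < d then n * r + x.length
  else if h : off k d x < (seqA k d n F x).length then
    n * blk k d x + ((seqA k d n F x)[off k d x]'h : Fin n).val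
  else n * r + (off k d x - (seqA k d n F x).length)

section Facts
variable {k d n r : ℕ} {F : Finset (List (Fin n))}

lemma off_lt (hk : 1 ≤ k) (x : List Bool) : off k d x < k + d :=
  Nat.mod_lt _ (by omega)

lemma decomp (hk : 1 ≤ k) {x : List Bool} (hd : d ≤ x.length) :
    x.length = d + ((k + d) * blk k d x + off k d x) := by
  have := Nat.div_add_mod (x.length - d) (k + d)
  unfold blk off
  omega

lemma rt_suffix (k d : ℕ) (x : List Bool) : x.drop (off k d x) <:+ x := List.drop_suffix _ _

lemma rt_length (hk : 1 ≤ k) {x : List Bool} (hd : d ≤ x.length) :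
    (x.drop (off k d x)).length = d + (k + d) * blk k d x := by
  rw [List.length_drop]
  have := decomp hk hd
  omega

lemma take_rt_length (hk : 1 ≤ k) {x : List Bool} (hd : d ≤ x.length) :
    ((x.drop (off k d x)).take d).length = d := by
  rw [List.length_take, rt_length hk hd]
  omega

lemma seqA_mem (hk : 1 ≤ k) (hcard : 2 ^ d ≤ F.card) {x : List Bool} (hd : d ≤ x.length) :
    seqA k d n F x ∈ F :=
  seqF_mem hcard (take_rt_length hk hd)

lemma blk_off_spec (hk : 1 ≤ k) {x : List Bool} {j s : ℕ}
    (hx : x.length = d + ((k + d) * j + s)) (hs : s < k + d) :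
    blk k d x = j ∧ off k d x = s := by
  unfold blk off
  have h1 : x.length - d = (k + d) * j + s := by omega
  rw [h1]
  constructor
  · rw [Nat.mul_add_div (by omega)]
    simp [Nat.div_eq_of_lt hs]
  · rw [Nat.mul_add_mod]
    exact Nat.mod_eq_of_lt hs

lemma blk_lt (hk : 1 ≤ k) {x : List Bool} (hd : d ≤ x.length)
    (hx : x.length < d + r * (k + d)) : blk k d x < r := by
  unfold blk
  rw [Nat.div_lt_iff_lt_mul (by omega : 0 < k + d)]
  omega

lemma grp_lt {j a : ℕ} (hj : j < r) (ha : a < n) : n * j + a < n * r := by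
  calc n * j + a < n * j + n := by omega
  _ = n * (j + 1) := (Nat.mul_succ n j).symm
  _ ≤ n * r := Nat.mul_le_mul_left n hj

lemma grp_decode {j a j' a' : ℕ} (ha : a < n) (ha' : a' < n)
    (h : n * j + a = n * j' + a') : j = j' ∧ a = a' := by
  have h1 : (n * j + a) / n = j := by
    rw [Nat.mul_add_div (by omega)]; simp [Nat.div_eq_of_lt ha]
  have h2 : (n * j' + a') / n = j' := by
    rw [Nat.mul_add_div (by omega)]; simp [Nat.div_eq_of_lt ha']
  have := h ▸ h1
  constructor
  · omega
  · have : j = j' := by omega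
    subst this; omega

lemma colo_top {x : List Bool} (h : x.length < d) :
    colo k d n r F x = n * r + x.length := by simp [colo, h]

lemma colo_fam {x : List Bool} (hd : ¬ (x.length < d))
    (h : off k d x < (seqA k d n F x).length) :
    colo k d n r F x = n * blk k d x + ((seqA k d n F x)[off k d x]'h : Fin n).val := by
  simp [colo, hd, h]

lemma colo_tail {x : List Bool} (hd : ¬ (x.length < d))
    (h : ¬ (off k d x < (seqA k d n F x).length)) :
    colo k d n r F x = n * r + (off k d x - (seqA k d n F x).length) := by
  simp [colo, hd, h]

end Facts

section Core
variable {k d n r : ℕ} {F : Finset (List (Fin n))}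

lemma core (hk : 1 ≤ k)
    (hnodup : ∀ l ∈ F, l.Nodup)
    (hpsf : ∀ A ∈ F, ∀ B ∈ F, A ≠ B → ∀ p : List (Fin n), p ≠ [] → p <+: A →
      p.toFinset ≠ B.toFinset)
    (hklen : ∀ l ∈ F, k ≤ l.length) (hcard : 2 ^ d ≤ F.card)
    (hlen : ∀ l ∈ F, l.length ≤ k + d)
    (m u v y₀ : List Bool) (jP : ℕ)
    (hu : u.length < d + r * (k + d)) (hv : v.length < d + r * (k + d))
    (hmu : m <:+ u) (hmv : m <:+ v)
    (hmmax : ∀ x : List Bool, x <:+ u → x <:+ v → x.length ≤ m.length)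
    (hy₀u : y₀ <:+ u) (hy₀d : d ≤ y₀.length)
    (hy₀tail : (seqA k d n F y₀).length ≤ off k d y₀)
    (hjP : jP ≤ blk k d y₀)
    (hW1 : m.length < d + (k + d) * jP) (hW2 : d + (k + d) * jP ≤ m.length + d) :
    ∃ z : List Bool, (m.length ≤ z.length ∧ (z <:+ u ∨ z <:+ v)) ∧
      ∀ y : List Bool, (m.length ≤ y.length ∧ (y <:+ u ∨ y <:+ v)) →
        colo k d n r F y = colo k d n r F z → y = z := by
  obtain ⟨Lr, hLr⟩ : ∃ Lr : ℕ, Lr = d + (k + d) * jP := ⟨_, rfl⟩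
  have hy₀D : y₀.length < d + r * (k + d) := lt_of_le_of_lt hy₀u.length_le hu
  have hy₀blk : blk k d y₀ < r := blk_lt hk hy₀d hy₀D
  have hjPr : jP < r := lt_of_le_of_lt hjP hy₀blk
  have hA₀mem : seqA k d n F y₀ ∈ F := seqA_mem hk hcard hy₀d
  have hA₀k : k ≤ (seqA k d n F y₀).length := hklen _ hA₀mem
  have hA₀K : (seqA k d n F y₀).length ≤ k + d := hlen _ hA₀mem
  have hdec₀ := decomp hk hy₀d
  have hmulP : (k + d) * jP ≤ (k + d) * blk k d y₀ := Nat.mul_le_mul_left _ hjP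
  have hLru : Lr ≤ u.length := le_trans (by omega) hy₀u.length_le
  -- ru and Au
  have hruLen : (u.drop (u.length - Lr)).length = Lr := by rw [List.length_drop]; omega
  have hruSfx : (u.drop (u.length - Lr)) <:+ u := List.drop_suffix _ _
  set Au := seqF n F ((u.drop (u.length - Lr)).take d) with hAu
  have hruTake : ((u.drop (u.length - Lr)).take d).length = d := by
    rw [List.length_take]; omega
  have hAuMem : Au ∈ F := seqF_mem hcard hruTake
  have hAuk : k ≤ Au.length := hklen _ hAuMem
  have hAuK : Au.length ≤ k + d := hlen _ hAuMem
  have hAuNodup : Au.Nodup := hnodup _ hAuMem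
  -- F4 : Lr + Au.length ≤ y₀.length
  have hF4 : Lr + Au.length ≤ y₀.length := by
    rcases Nat.eq_or_lt_of_le hjP with heq | hlt
    · have hrty : (y₀.drop (off k d y₀)).length = Lr := by
        rw [rt_length hk hy₀d, ← heq, hLr]
      have hrteq : y₀.drop (off k d y₀) = u.drop (u.length - Lr) :=
        suffix_eq_of_length ((rt_suffix k d y₀).trans hy₀u) hruSfx (by rw [hrty, hruLen])
      have hseq : seqA k d n F y₀ = Au := by rw [seqA, hrteq, hAu]
      have hAul : Au.length ≤ off k d y₀ := hseq ▸ hy₀tail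
      rw [← heq] at hdec₀
      omega
    · have hmul2 : (k + d) * (jP + 1) ≤ (k + d) * blk k d y₀ := Nat.mul_le_mul_left _ hlt
      have hmul3 : (k + d) * (jP + 1) = (k + d) * jP + (k + d) := Nat.mul_succ _ _
      omega
  -- generic chunk computation
  have hchunk : ∀ (l : List Bool) (o : ℕ), Lr + o ≤ l.length → o < k + d →
      (l.drop (l.length - (Lr + o))).length = Lr + o ∧
      blk k d (l.drop (l.length - (Lr + o))) = jP ∧
      off k d (l.drop (l.length - (Lr + o))) = o ∧
      seqA k d n F (l.drop (l.length - (Lr + o))) =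
        seqF n F ((l.drop (l.length - Lr)).take d) := by
    intro l o hle hoK
    have hzLen : (l.drop (l.length - (Lr + o))).length = Lr + o := by
      rw [List.length_drop]; omega
    have hspec := blk_off_spec (k := k) (d := d) hk
      (x := l.drop (l.length - (Lr + o))) (j := jP) (s := o) (by omega) hoK
    have hzdrop : (l.drop (l.length - (Lr + o))).drop (off k d (l.drop (l.length - (Lr + o))))
        = l.drop (l.length - Lr) := by
      rw [hspec.2, List.drop_drop]
      congr 1
      omega
    refine ⟨hzLen, hspec.1, hspec.2, ?_⟩
    rw [seqA, hzdrop]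
  -- generic root identification
  have hrtGen : ∀ (l : List Bool), Lr ≤ l.length → ∀ y : List Bool, y <:+ l → d ≤ y.length →
      blk k d y = jP → y.drop (off k d y) = l.drop (l.length - Lr) := by
    intro l hlLr y hyl hyd hblk
    refine suffix_eq_of_length ((rt_suffix k d y).trans hyl) (List.drop_suffix _ _) ?_
    rw [rt_length hk hyd, hblk, List.length_drop]
    omega
  -- decoding
  have hdecode : ∀ y : List Bool, (y <:+ u ∨ y <:+ v) →
      ∀ a : Fin n, colo k d n r F y = n * jP + a.val →
      ∃ hfam : off k d y < (seqA k d n F y).length,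
        blk k d y = jP ∧ (seqA k d n F y)[off k d y]'hfam = a ∧
        y.length = Lr + off k d y := by
    intro y hyuv a hc
    have hyD : y.length < d + r * (k + d) := by
      rcases hyuv with h | h
      · exact lt_of_le_of_lt h.length_le hu
      · exact lt_of_le_of_lt h.length_le hv
    have hnr : n * jP + a.val < n * r := grp_lt hjPr a.isLt
    by_cases hyd : y.length < d
    · rw [colo_top hyd] at hc; omega
    · by_cases hfam : off k d y < (seqA k d n F y).length
      · rw [colo_fam hyd hfam] at hc
        have hblky : blk k d y < r := blk_lt hk (by omega) hyD
        have hdec := grp_decode ((seqA k d n F y)[off k d y]'hfam).isLt a.isLt hc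
        refine ⟨hfam, hdec.1, Fin.ext hdec.2, ?_⟩
        have := decomp hk (by omega : d ≤ y.length)
        rw [hdec.1] at this
        omega
      · rw [colo_tail hyd hfam] at hc; omega
  by_cases hvLr : Lr ≤ v.length
  · -- both legs reach block jP
    have hrvTake : ((v.drop (v.length - Lr)).take d).length = d := by
      rw [List.length_take, List.length_drop]; omega
    set Av := seqF n F ((v.drop (v.length - Lr)).take d) with hAv
    have hAvMem : Av ∈ F := seqF_mem hcard hrvTake
    have hAvk : k ≤ Av.length := hklen _ hAvMem
    have hAvK : Av.length ≤ k + d := hlen _ hAvMem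
    have hAvNodup : Av.Nodup := hnodup _ hAvMem
    -- Au ≠ Av
    have hAuAv : Au ≠ Av := by
      intro heq
      have hdu : (u.drop (u.length - Lr)).drop d = (v.drop (v.length - Lr)).drop d := by
        have h1 : ((u.drop (u.length - Lr)).drop d) <:+ u :=
          (List.drop_suffix _ _).trans hruSfx
        have h2 : ((v.drop (v.length - Lr)).drop d) <:+ v :=
          (List.drop_suffix _ _).trans (List.drop_suffix _ _)
        have hl1 : ((u.drop (u.length - Lr)).drop d).length = Lr - d := by
          rw [List.length_drop, hruLen]
        have hl2 : ((v.drop (v.length - Lr)).drop d).length = Lr - d := by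
          rw [List.length_drop, List.length_drop]; omega
        have hm1 : ((u.drop (u.length - Lr)).drop d) <:+ m :=
          suffix_of_suffix_length_le h1 hmu (by omega)
        have hm2 : ((v.drop (v.length - Lr)).drop d) <:+ m :=
          suffix_of_suffix_length_le h2 hmv (by omega)
        exact suffix_eq_of_length hm1 hm2 (by omega)
      have hweq : (u.drop (u.length - Lr)).take d = (v.drop (v.length - Lr)).take d :=
        seqF_inj hcard hruTake hrvTake (hAu ▸ hAv ▸ heq)
      have hrueq : u.drop (u.length - Lr) = v.drop (v.length - Lr) := by
        rw [← List.take_append_drop d (u.drop (u.length - Lr)),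
            ← List.take_append_drop d (v.drop (v.length - Lr)), hweq, hdu]
      have : (u.drop (u.length - Lr)).length ≤ m.length :=
        hmmax _ hruSfx (hrueq ▸ List.drop_suffix _ _)
      rw [hruLen] at this
      omega
    -- prefix of Av on the v leg
    obtain ⟨pl, hplL, hplAv, hpl1, hpllt⟩ :
        ∃ pl : ℕ, pl ≤ v.length - Lr + 1 ∧ pl ≤ Av.length ∧ 1 ≤ pl ∧
          ∀ t : ℕ, t ≤ v.length - Lr → t < Av.length → t < pl :=
      ⟨min (v.length - Lr + 1) Av.length, min_le_left _ _, min_le_right _ _,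
        le_min (by omega) (by omega), fun t h1 h2 => lt_min (by omega) h2⟩
    have hlenpAv : (Av.take pl).length = pl := by
      rw [List.length_take]
      exact min_eq_left hplAv
    have hpAvne : Av.take pl ≠ [] := by
      intro h
      rw [h] at hlenpAv
      simp at hlenpAv
      omega
    have hne : (Av.take pl).toFinset ≠ Au.toFinset :=
      hpsf Av hAvMem Au hAuMem (fun h => hAuAv h.symm) (Av.take pl) hpAvne (List.take_prefix _ _)
    obtain ⟨a, ha⟩ : ∃ a : Fin n, (a ∈ Au ∧ a ∉ Av.take pl) ∨ (a ∈ Av.take pl ∧ a ∉ Au) := by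
      by_contra hco
      push_neg at hco
      apply hne
      ext a
      simp only [List.mem_toFinset]
      have := hco a
      tauto
    rcases ha with ⟨haAu, haAv⟩ | ⟨haAv, haAu⟩
    · -- witness on the u leg
      obtain ⟨o, ho, hao⟩ := List.mem_iff_getElem.mp haAu
      have hleo : Lr + o ≤ u.length := by
        have := hy₀u.length_le; omega
      obtain ⟨hzLen, hzblk, hzoff, hzseq⟩ := hchunk u o hleo (by omega)
      have hzd : ¬ ((u.drop (u.length - (Lr + o))).length < d) := by omega
      have hzfam : off k d (u.drop (u.length - (Lr + o))) <
          (seqA k d n F (u.drop (u.length - (Lr + o)))).length := by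
        rw [hzseq, ← hAu, hzoff]; exact ho
      have hzcolo : colo k d n r F (u.drop (u.length - (Lr + o))) = n * jP + a.val := by
        rw [colo_fam hzd hzfam]
        congr 1
        · rw [hzblk]
        · have : (seqA k d n F (u.drop (u.length - (Lr + o))))[off k d
              (u.drop (u.length - (Lr + o)))]'hzfam = Au[o]'ho := by
            simp only [hzseq, ← hAu, hzoff]
          rw [this, hao]
      refine ⟨u.drop (u.length - (Lr + o)), ⟨by omega, Or.inl (List.drop_suffix _ _)⟩, ?_⟩
      intro y ⟨hym, hyuv⟩ hyc
      rw [hzcolo] at hyc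
      obtain ⟨hyfam, hyblk, hyval, hyLen⟩ := hdecode y hyuv a hyc
      rcases hyuv with hyl | hyl
      · -- y on the u leg
        have hyd : d ≤ y.length := by omega
        have hyrt := hrtGen u hLru y hyl hyd hyblk
        have hyseq : seqA k d n F y = Au := by rw [seqA, hyrt, hAu]
        have hoffy : off k d y < Au.length := by rw [← hyseq]; exact hyfam
        have : Au[off k d y]'hoffy = Au[o]'ho := by
          rw [hao]
          rw [← hyval]
          simp only [hyseq]
        have hoeq : off k d y = o := hAuNodup.getElem_inj_iff.mp this
        refine suffix_eq_of_length hyl (List.drop_suffix _ _) ?_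
        rw [hzLen, hyLen, hoeq]
      · -- y on the v leg : contradiction
        exfalso
        have hyd : d ≤ y.length := by omega
        have hyrt := hrtGen v hvLr y hyl hyd hyblk
        have hyseq : seqA k d n F y = Av := by rw [seqA, hyrt, hAv]
        have hoffy : off k d y < Av.length := by rw [← hyseq]; exact hyfam
        have hoffpl : off k d y < pl := by
          have := hyl.length_le
          exact hpllt _ (by omega) hoffy
        apply haAv
        rw [List.mem_iff_getElem]
        refine ⟨off k d y, ?_, ?_⟩
        · rw [hlenpAv]; exact hoffpl
        · rw [List.getElem_take]
          rw [← hyval]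
          simp only [hyseq]
    · -- witness on the v leg
      obtain ⟨o, ho', hao⟩ := List.mem_iff_getElem.mp haAv
      have ho'len : o < pl := by
        have := ho'
        rw [hlenpAv] at this
        exact this
      have ho : o < Av.length := by omega
      have hao' : Av[o]'ho = a := by
        rw [← hao, List.getElem_take]
      have hleo : Lr + o ≤ v.length := by omega
      obtain ⟨hzLen, hzblk, hzoff, hzseq⟩ := hchunk v o hleo (by omega)
      have hzd : ¬ ((v.drop (v.length - (Lr + o))).length < d) := by omega
      have hzfam : off k d (v.drop (v.length - (Lr + o))) <
          (seqA k d n F (v.drop (v.length - (Lr + o)))).length := by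
        rw [hzseq, ← hAv, hzoff]; exact ho
      have hzcolo : colo k d n r F (v.drop (v.length - (Lr + o))) = n * jP + a.val := by
        rw [colo_fam hzd hzfam]
        congr 1
        · rw [hzblk]
        · have : (seqA k d n F (v.drop (v.length - (Lr + o))))[off k d
              (v.drop (v.length - (Lr + o)))]'hzfam = Av[o]'ho := by
            simp only [hzseq, ← hAv, hzoff]
          rw [this, hao']
      refine ⟨v.drop (v.length - (Lr + o)), ⟨by omega, Or.inr (List.drop_suffix _ _)⟩, ?_⟩
      intro y ⟨hym, hyuv⟩ hyc
      rw [hzcolo] at hyc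
      obtain ⟨hyfam, hyblk, hyval, hyLen⟩ := hdecode y hyuv a hyc
      rcases hyuv with hyl | hyl
      · -- y on the u leg : contradiction
        exfalso
        have hyd : d ≤ y.length := by omega
        have hyrt := hrtGen u hLru y hyl hyd hyblk
        have hyseq : seqA k d n F y = Au := by rw [seqA, hyrt, hAu]
        have hoffy : off k d y < Au.length := by rw [← hyseq]; exact hyfam
        apply haAu
        rw [List.mem_iff_getElem]
        refine ⟨off k d y, hoffy, ?_⟩
        rw [← hyval]
        simp only [hyseq]
      · -- y on the v leg
        have hyd : d ≤ y.length := by omega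
        have hyrt := hrtGen v hvLr y hyl hyd hyblk
        have hyseq : seqA k d n F y = Av := by rw [seqA, hyrt, hAv]
        have hoffy : off k d y < Av.length := by rw [← hyseq]; exact hyfam
        have : Av[off k d y]'hoffy = Av[o]'ho := by
          rw [hao']
          rw [← hyval]
          simp only [hyseq]
        have hoeq : off k d y = o := hAvNodup.getElem_inj_iff.mp this
        refine suffix_eq_of_length hyl (List.drop_suffix _ _) ?_
        rw [hzLen, hyLen, hoeq]
  · -- only the u leg reaches block jP
    push_neg at hvLr
    obtain ⟨hzLen, hzblk, hzoff, hzseq⟩ := hchunk u 0 (by omega) (by omega)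
    have ho : 0 < Au.length := by omega
    have hzd : ¬ ((u.drop (u.length - (Lr + 0))).length < d) := by omega
    have hzfam : off k d (u.drop (u.length - (Lr + 0))) <
        (seqA k d n F (u.drop (u.length - (Lr + 0)))).length := by
      rw [hzseq, ← hAu, hzoff]; exact ho
    have hzcolo : colo k d n r F (u.drop (u.length - (Lr + 0))) = n * jP + (Au[0]'ho).val := by
      rw [colo_fam hzd hzfam]
      congr 1
      · rw [hzblk]
      · simp only [hzseq, ← hAu, hzoff]
    refine ⟨u.drop (u.length - (Lr + 0)), ⟨by omega, Or.inl (List.drop_suffix _ _)⟩, ?_⟩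
    intro y ⟨hym, hyuv⟩ hyc
    rw [hzcolo] at hyc
    obtain ⟨hyfam, hyblk, hyval, hyLen⟩ := hdecode y hyuv (Au[0]'ho) hyc
    rcases hyuv with hyl | hyl
    · have hyd : d ≤ y.length := by omega
      have hyrt := hrtGen u hLru y hyl hyd hyblk
      have hyseq : seqA k d n F y = Au := by rw [seqA, hyrt, hAu]
      have hoffy : off k d y < Au.length := by rw [← hyseq]; exact hyfam
      have : Au[off k d y]'hoffy = Au[0]'ho := by
        rw [← hyval]
        simp only [hyseq]
      have hoeq : off k d y = 0 := hAuNodup.getElem_inj_iff.mp this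
      refine suffix_eq_of_length hyl (List.drop_suffix _ _) ?_
      rw [hzLen, hyLen, hoeq]
    · exfalso
      have := hyl.length_le
      omega

end Core

section Main
variable {k d n r : ℕ} {F : Finset (List (Fin n))}

lemma colo_lt (hk : 1 ≤ k) (hklen : ∀ l ∈ F, k ≤ l.length) (hcard : 2 ^ d ≤ F.card)
    {x : List Bool} (hx : x.length < d + r * (k + d)) : colo k d n r F x < n * r + d := by
  by_cases hxd : x.length < d
  · rw [colo_top hxd]; omega
  · by_cases hfam : off k d x < (seqA k d n F x).length
    · rw [colo_fam hxd hfam]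
      have h1 := grp_lt (blk_lt hk (not_lt.mp hxd) hx)
        ((seqA k d n F x)[off k d x]'hfam).isLt
      omega
    · rw [colo_tail hxd hfam]
      have h1 : k ≤ (seqA k d n F x).length := hklen _ (seqA_mem hk hcard (not_lt.mp hxd))
      have h2 := off_lt (d := d) hk x
      omega

lemma main (hk : 1 ≤ k)
    (hnodup : ∀ l ∈ F, l.Nodup)
    (hpsf : ∀ A ∈ F, ∀ B ∈ F, A ≠ B → ∀ p : List (Fin n), p ≠ [] → p <+: A →
      p.toFinset ≠ B.toFinset)
    (hklen : ∀ l ∈ F, k ≤ l.length) (hcard : 2 ^ d ≤ F.card)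
    (hlen : ∀ l ∈ F, l.length ≤ k + d)
    (u v : List Bool) (hu : u.length < d + r * (k + d)) (hv : v.length < d + r * (k + d)) :
    ∃ z : List Bool, memP u v z ∧
      ∀ y : List Bool, memP u v y → colo k d n r F y = colo k d n r F z → y = z := by
  by_cases hall : ∀ y, memP u v y → colo k d n r F y = colo k d n r F (lcs u v) → y = lcs u v
  · exact ⟨lcs u v, ⟨le_rfl, Or.inl (lcs_suffix_left u v)⟩, hall⟩
  push_neg at hall
  obtain ⟨y₀, hy₀P, hy₀c, hy₀ne⟩ := hall
  have hmu := lcs_suffix_left u v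
  have hmv := lcs_suffix_right u v
  have hmmax : ∀ x : List Bool, x <:+ u → x <:+ v → x.length ≤ (lcs u v).length :=
    fun x h1 h2 => (suffix_lcs h1 h2).length_le
  obtain ⟨hy₀len, hy₀uv⟩ := hy₀P
  have hmy : lcs u v <:+ y₀ := by
    rcases hy₀uv with h | h
    · exact suffix_of_suffix_length_le hmu h hy₀len
    · exact suffix_of_suffix_length_le hmv h hy₀len
  have hy₀D : y₀.length < d + r * (k + d) := by
    rcases hy₀uv with h | h
    · exact lt_of_le_of_lt h.length_le hu
    · exact lt_of_le_of_lt h.length_le hv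
  -- rigidity helper
  have hrig : ∀ y : List Bool, (y <:+ u ∨ y <:+ v) → (lcs u v).length ≤ y.length →
      ¬ (y.length < d) → ¬ ((lcs u v).length < d) → blk k d y = blk k d (lcs u v) →
      colo k d n r F y = colo k d n r F (lcs u v) → y = lcs u v := by
    intro y hyuv hylen hyd hmd hblk hc
    have hrt : y.drop (off k d y) = (lcs u v).drop (off k d (lcs u v)) := by
      have h1 : (y.drop (off k d y)).length = ((lcs u v).drop (off k d (lcs u v))).length := by
        rw [rt_length hk (not_lt.mp hyd), rt_length hk (not_lt.mp hmd), hblk]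
      rcases hyuv with h | h
      · exact suffix_eq_of_length ((rt_suffix k d y).trans h) ((rt_suffix _ _ _).trans hmu) h1
      · exact suffix_eq_of_length ((rt_suffix k d y).trans h) ((rt_suffix _ _ _).trans hmv) h1
    have hseq : seqA k d n F y = seqA k d n F (lcs u v) := by
      rw [seqA, seqA, hrt]
    have hoff : off k d y = off k d (lcs u v) := by
      by_cases hyf : off k d y < (seqA k d n F y).length
      · by_cases hmf : off k d (lcs u v) < (seqA k d n F (lcs u v)).length
        · rw [colo_fam hyd hyf, colo_fam hmd hmf, hblk] at hc
          have hyf' : off k d y < (seqA k d n F (lcs u v)).length := hseq ▸ hyf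
          have hv1 : ((seqA k d n F y)[off k d y]'hyf).val =
              ((seqA k d n F (lcs u v))[off k d y]'hyf').val := by
            simp only [hseq]
          have hval : ((seqA k d n F (lcs u v))[off k d y]'hyf') =
              ((seqA k d n F (lcs u v))[off k d (lcs u v)]'hmf) := by
            apply Fin.ext
            omega
          exact ((hnodup _ (seqA_mem hk hcard (not_lt.mp hmd))).getElem_inj_iff).mp hval
        · exfalso
          rw [colo_fam hyd hyf, colo_tail hmd hmf] at hc
          have := grp_lt (blk_lt hk (not_lt.mp hyd)
            (by rcases hyuv with h | h
                · exact lt_of_le_of_lt h.length_le hu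
                · exact lt_of_le_of_lt h.length_le hv))
            ((seqA k d n F y)[off k d y]'hyf).isLt
          omega
      · by_cases hmf : off k d (lcs u v) < (seqA k d n F (lcs u v)).length
        · exfalso
          rw [colo_tail hyd hyf, colo_fam hmd hmf] at hc
          have := grp_lt (blk_lt hk (not_lt.mp hmd) (lt_of_le_of_lt hmu.length_le hu))
            ((seqA k d n F (lcs u v))[off k d (lcs u v)]'hmf).isLt
          omega
        · rw [colo_tail hyd hyf, colo_tail hmd hmf] at hc
          rw [hseq] at hyf hc
          push_neg at hyf hmf
          omega
    have hleneq : y.length = (lcs u v).length := by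
      have h1 := decomp hk (not_lt.mp hyd)
      have h2 := decomp hk (not_lt.mp hmd)
      rw [hblk, hoff] at h1
      omega
    rcases hyuv with h | h
    · exact suffix_eq_of_length h hmu hleneq
    · exact suffix_eq_of_length h hmv hleneq
  by_cases hmd : (lcs u v).length < d
  · -- apex in the top block
    have hy₀d : d ≤ y₀.length := by
      by_contra h
      push_neg at h
      rw [colo_top h, colo_top hmd] at hy₀c
      exact hy₀ne (hmy.eq_of_length (by omega)).symm
    have hy₀tail : (seqA k d n F y₀).length ≤ off k d y₀ := by
      by_contra h
      push_neg at h
      rw [colo_fam (not_lt.mpr hy₀d) h, colo_top hmd] at hy₀c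
      have h2 := grp_lt (blk_lt hk hy₀d hy₀D) ((seqA k d n F y₀)[off k d y₀]'h).isLt
      omega
    rcases hy₀uv with hcase | hcase
    · exact core hk hnodup hpsf hklen hcard hlen (lcs u v) u v y₀ 0 hu hv hmu hmv hmmax
        hcase hy₀d hy₀tail (Nat.zero_le _) (by simpa using hmd) (by omega)
    · obtain ⟨z, hz1, hz2⟩ := core hk hnodup hpsf hklen hcard hlen (lcs u v) v u y₀ 0 hv hu
        hmv hmu (fun x h1 h2 => hmmax x h2 h1) hcase hy₀d hy₀tail (Nat.zero_le _)
        (by simpa using hmd) (by omega)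
      exact ⟨z, ⟨hz1.1, hz1.2.symm⟩, fun y hy hc => hz2 y ⟨hy.1, hy.2.symm⟩ hc⟩
  · -- apex inside a block
    have hmD : (lcs u v).length < d + r * (k + d) := lt_of_le_of_lt hmu.length_le hu
    by_cases hmfam : off k d (lcs u v) < (seqA k d n F (lcs u v)).length
    · -- apex family-colored : contradiction with hy₀ne
      exfalso
      apply hy₀ne
      have hy₀d : d ≤ y₀.length := le_trans (not_lt.mp hmd) hy₀len
      have hblk : blk k d y₀ = blk k d (lcs u v) := by
        by_cases hy₀fam : off k d y₀ < (seqA k d n F y₀).length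
        · have hc := hy₀c
          rw [colo_fam (not_lt.mpr hy₀d) hy₀fam, colo_fam hmd hmfam] at hc
          exact (grp_decode ((seqA k d n F y₀)[off k d y₀]'hy₀fam).isLt
            ((seqA k d n F (lcs u v))[off k d (lcs u v)]'hmfam).isLt hc).1
        · exfalso
          have hc := hy₀c
          rw [colo_tail (not_lt.mpr hy₀d) hy₀fam, colo_fam hmd hmfam] at hc
          have := grp_lt (blk_lt hk (not_lt.mp hmd) hmD)
            ((seqA k d n F (lcs u v))[off k d (lcs u v)]'hmfam).isLt
          omega
      exact hrig y₀ hy₀uv hy₀len (not_lt.mpr hy₀d) hmd hblk hy₀c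
    · -- apex tail-colored
      have hy₀d : d ≤ y₀.length := le_trans (not_lt.mp hmd) hy₀len
      have hy₀tail : (seqA k d n F y₀).length ≤ off k d y₀ := by
        by_contra h
        push_neg at h
        rw [colo_fam (not_lt.mpr hy₀d) h, colo_tail hmd hmfam] at hy₀c
        have h2 := grp_lt (blk_lt hk hy₀d hy₀D) ((seqA k d n F y₀)[off k d y₀]'h).isLt
        omega
      have hblkne : blk k d y₀ ≠ blk k d (lcs u v) := by
        intro heq
        exact hy₀ne (hrig y₀ hy₀uv hy₀len (not_lt.mpr hy₀d) hmd heq hy₀c)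
      have hblkle : blk k d (lcs u v) ≤ blk k d y₀ := Nat.div_le_div_right (by omega)
      have hAm_mem : seqA k d n F (lcs u v) ∈ F := seqA_mem hk hcard (not_lt.mp hmd)
      have hAmk : k ≤ (seqA k d n F (lcs u v)).length := hklen _ hAm_mem
      have hdecm := decomp hk (not_lt.mp hmd)
      have hoffm := off_lt (d := d) hk (lcs u v)
      have hmulsucc : (k + d) * (blk k d (lcs u v) + 1) =
          (k + d) * blk k d (lcs u v) + (k + d) := Nat.mul_succ _ _
      have hmtail : (seqA k d n F (lcs u v)).length ≤ off k d (lcs u v) := not_lt.mp hmfam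
      have hW1 : (lcs u v).length < d + (k + d) * (blk k d (lcs u v) + 1) := by omega
      have hW2 : d + (k + d) * (blk k d (lcs u v) + 1) ≤ (lcs u v).length + d := by omega
      have hjP : blk k d (lcs u v) + 1 ≤ blk k d y₀ := by omega
      rcases hy₀uv with hcase | hcase
      · exact core hk hnodup hpsf hklen hcard hlen (lcs u v) u v y₀
          (blk k d (lcs u v) + 1) hu hv hmu hmv hmmax hcase hy₀d hy₀tail hjP hW1 hW2
      · obtain ⟨z, hz1, hz2⟩ := core hk hnodup hpsf hklen hcard hlen (lcs u v) v u y₀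
          (blk k d (lcs u v) + 1) hv hu hmv hmu (fun x h1 h2 => hmmax x h2 h1) hcase
          hy₀d hy₀tail hjP hW1 hW2
        exact ⟨z, ⟨hz1.1, hz1.2.symm⟩, fun y hy hc => hz2 y ⟨hy.1, hy.2.symm⟩ hc⟩

end Main

lemma cf_le {D c : ℕ} (C : List Bool → ℕ) (hC : ∀ x : List Bool, x.length < D → C x < c)
    (hmain : ∀ u v : List Bool, u.length < D → v.length < D →
      ∃ z, memP u v z ∧ ∀ y, memP u v y → C y = C z → y = z) :
    CF (binaryTree D) ≤ c := by
  unfold CF cfNum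
  apply Nat.sInf_le
  refine ⟨fun vtx => ⟨C vtx.1, hC _ vtx.2⟩, ?_⟩
  rintro e ⟨u, v, p, hp, rfl⟩
  obtain ⟨z, hzP, hzU⟩ := hmain u.1 v.1 u.2 v.2
  have hzlen : z.length < D := by
    rcases hzP.2 with h | h
    · exact lt_of_le_of_lt h.length_le u.2
    · exact lt_of_le_of_lt h.length_le v.2
  refine ⟨⟨C z, hC _ hzlen⟩, ?_⟩
  rw [Finset.card_eq_one]
  refine ⟨⟨z, hzlen⟩, ?_⟩
  ext x
  simp only [Finset.mem_filter, Finset.mem_singleton, List.mem_toFinset]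
  constructor
  · rintro ⟨hx1, hx2⟩
    have hxP : memP u.1 v.1 x.1 := (support_iff p hp x).mp hx1
    have hcx : C x.1 = C z := by
      have := congrArg Fin.val hx2
      simpa using this
    exact Subtype.ext (hzU x.1 hxP hcx)
  · rintro rfl
    exact ⟨(support_iff p hp _).mpr hzP, rfl⟩

end Stmt18

theorem stmt18 (k d n : ℕ) (F : Finset (List (Fin n)))
    (hF : IsPSFFamily k d n F) (hlen : ∀ l ∈ F, l.length ≤ k + d) :
    ∀ r : ℕ, 1 ≤ r → CF (binaryTree (d * (r + 1) + k * r)) ≤ n * r + d := by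
  intro r hr
  obtain ⟨⟨hnodup, hpsf⟩, hklen, hcard⟩ := hF
  have hD : d * (r + 1) + k * r = d + r * (k + d) := by ring
  rcases Nat.eq_zero_or_pos k with hk0 | hk
  · subst hk0
    have hdn : d ≤ n := by
      have h1 : F.card ≤ 2 ^ n := by
        have hinj : Set.InjOn (fun l : List (Fin n) => l.toFinset) F := by
          intro A hA B hB hAB
          by_contra hne
          by_cases hAe : A = []
          · subst hAe
            have hB0 : B = [] := by
              have : B.toFinset = ∅ := by simpa using hAB.symm
              simpa using this
            exact hne hB0.symm
          · exact hpsf A hA B hB hne A hAe (List.prefix_refl A) hAB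
        calc F.card = (F.image (fun l => l.toFinset)).card :=
              (Finset.card_image_of_injOn hinj).symm
          _ ≤ (Finset.univ : Finset (Finset (Fin n))).card :=
              Finset.card_le_card (Finset.subset_univ _)
          _ = 2 ^ n := by rw [Finset.card_univ, Fintype.card_finset, Fintype.card_fin]
      exact (Nat.pow_le_pow_iff_right (by norm_num : 1 < 2)).mp (le_trans hcard h1)
    refine Stmt18.cf_le (fun x => x.length) (fun x hx => ?_) ?_
    · show x.length < n * r + d
      have h2 : d * r ≤ n * r := Nat.mul_le_mul hdn (le_refl r)
      have h3 : d * (r + 1) + 0 * r = d * r + d := by ring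
      omega
    · intro u v hu hv
      exact ⟨Stmt18.lcs u v, ⟨le_rfl, Or.inl (Stmt18.lcs_suffix_left u v)⟩, fun y hy hl => by
        rcases hy.2 with h | h
        · exact Stmt18.suffix_eq_of_length h (Stmt18.lcs_suffix_left u v) hl
        · exact Stmt18.suffix_eq_of_length h (Stmt18.lcs_suffix_right u v) hl⟩
  · rw [hD]
    refine Stmt18.cf_le (Stmt18.colo k d n r F)
      (fun x hx => Stmt18.colo_lt hk hklen hcard hx) ?_
    exact fun u v hu hv => Stmt18.main hk hnodup hpsf hklen hcard hlen u v hu hv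
end
end
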